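/- arXiv:2408.06477 — 6 statements merged into one kernel-verified Lean document; each statement's English description precedes it below -/
import Mathlib

section
/- Cross modality of the binomial-n family: fix 0<p<1 and k ≥ 1. If n maximizes the likelihood n ↦ f(k;n,p) over nonnegative integers n, then k is a mode of f(·;n,p), i.e. f(k;n,p) ≥ f(j;n,p) for all j. -/
/-!
Comparing the likelihood at `n` with its values at `n + 1` and `n - 1` gives `n p ≤ k ≤ (n + 1) p`,
because `f(k; n+1, p) / f(k; n, p) = (n + 1)(1 - p) / (n + 1 - k)`. On the other hand
`f(j+1; n, p) / f(j; n, p) = (n - j) p / ((j + 1)(1 - p))`, which is `≥ 1` exactly when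
`j + 1 ≤ (n + 1) p`. So `j ↦ f(j; n, p)` increases up to `k` and decreases from `k` on.
-/

/-- Binomial probability function f(k;n,p) = C(n,k) p^k (1-p)^(n-k). -/
noncomputable def binPMF (n k : ℕ) (p : ℝ) : ℝ := (n.choose k) * p ^ k * (1 - p) ^ (n - k)

section binPMF

variable {p : ℝ}

lemma binPMF_eq_zero_of_lt {n k : ℕ} (h : n < k) (p : ℝ) : binPMF n k p = 0 := by
  simp [binPMF, Nat.choose_eq_zero_of_lt h]

lemma binPMF_nonneg (n k : ℕ) (hp0 : 0 ≤ p) (hp1 : p ≤ 1) : 0 ≤ binPMF n k p := by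
  unfold binPMF
  have : 0 ≤ 1 - p := by linarith
  positivity

lemma binPMF_pos {n k : ℕ} (h : k ≤ n) (hp0 : 0 < p) (hp1 : p < 1) : 0 < binPMF n k p := by
  unfold binPMF
  have : 0 < ((n.choose k : ℕ) : ℝ) := by exact_mod_cast Nat.choose_pos h
  have : 0 < 1 - p := by linarith
  positivity

/-- Multiplied out, the ratio identity holds for every `j`, also for `j ≥ n` where both sides
vanish. -/
lemma binPMF_succ_mul (n j : ℕ) (p : ℝ) :
    binPMF n (j + 1) p * ((j + 1) * (1 - p)) = binPMF n j p * ((n - j) * p) := by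
  rcases lt_trichotomy j n with hjn | rfl | hnj
  · have hchoose : (n.choose (j + 1) : ℝ) * (j + 1) = n.choose j * ((n : ℝ) - j) := by
      rw [← Nat.cast_sub hjn.le]
      exact_mod_cast Nat.choose_succ_right_eq n j
    obtain ⟨m, hm⟩ : ∃ m, n - j = m + 1 := ⟨n - (j + 1), by omega⟩
    have hm' : n - (j + 1) = m := by omega
    rw [binPMF, binPMF, hm, hm', pow_succ, pow_succ]
    linear_combination p ^ j * p * (1 - p) ^ m * (1 - p) * hchoose
  · simp [binPMF_eq_zero_of_lt (Nat.lt_succ_self j)]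
  · simp [binPMF_eq_zero_of_lt hnj, binPMF_eq_zero_of_lt (hnj.trans (Nat.lt_succ_self j))]

lemma binPMF_succ_trials_mul (n k : ℕ) (p : ℝ) :
    binPMF (n + 1) k p * ((n + 1) - k) = binPMF n k p * ((n + 1) * (1 - p)) := by
  rcases lt_trichotomy k (n + 1) with hkn | rfl | hnk
  · have hchoose : (n.choose k : ℝ) * (n + 1) = (n + 1).choose k * ((n : ℝ) + 1 - k) := by
      rw [← Nat.cast_add_one, ← Nat.cast_sub hkn.le]
      exact_mod_cast Nat.choose_mul_succ_eq n k
    obtain ⟨m, hm⟩ : ∃ m, n + 1 - k = m + 1 := ⟨n - k, by omega⟩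
    have hm' : n - k = m := by omega
    rw [binPMF, binPMF, hm, hm', pow_succ]
    linear_combination -(p ^ k * (1 - p) ^ m * (1 - p)) * hchoose
  · simp [binPMF_eq_zero_of_lt (Nat.lt_succ_self n)]
  · simp [binPMF_eq_zero_of_lt hnk, binPMF_eq_zero_of_lt ((Nat.lt_succ_self n).trans hnk)]

lemma binPMF_le_binPMF_succ {n j : ℕ} (hp0 : 0 ≤ p) (hp1 : p < 1) (h : (j + 1 : ℝ) ≤ (n + 1) * p) :
    binPMF n j p ≤ binPMF n (j + 1) p := by
  have hc : 0 < (j + 1 : ℝ) * (1 - p) := by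
    have : 0 < 1 - p := by linarith
    positivity
  refine le_of_mul_le_mul_right ?_ hc
  calc binPMF n j p * ((j + 1) * (1 - p))
      ≤ binPMF n j p * ((n - j) * p) :=
        mul_le_mul_of_nonneg_left (by linarith) (binPMF_nonneg n j hp0 hp1.le)
    _ = binPMF n (j + 1) p * ((j + 1) * (1 - p)) := (binPMF_succ_mul n j p).symm

lemma binPMF_succ_le_binPMF {n j : ℕ} (hp0 : 0 ≤ p) (hp1 : p < 1) (h : (n + 1) * p ≤ (j + 1 : ℝ)) :
    binPMF n (j + 1) p ≤ binPMF n j p := by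
  have hc : 0 < (j + 1 : ℝ) * (1 - p) := by
    have : 0 < 1 - p := by linarith
    positivity
  refine le_of_mul_le_mul_right ?_ hc
  calc binPMF n (j + 1) p * ((j + 1) * (1 - p))
      = binPMF n j p * ((n - j) * p) := binPMF_succ_mul n j p
    _ ≤ binPMF n j p * ((j + 1) * (1 - p)) :=
        mul_le_mul_of_nonneg_left (by linarith) (binPMF_nonneg n j hp0 hp1.le)

lemma monotoneOn_binPMF_Iic {n k : ℕ} (hp0 : 0 ≤ p) (hp1 : p < 1) (hk : (k : ℝ) ≤ (n + 1) * p) :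
    MonotoneOn (binPMF n · p) (Set.Iic k) :=
  monotoneOn_of_le_add_one Set.ordConnected_Iic fun j _ _ hj1 =>
    binPMF_le_binPMF_succ hp0 hp1 (le_trans (by exact_mod_cast hj1) hk)

lemma antitoneOn_binPMF_Ici {n k : ℕ} (hp0 : 0 ≤ p) (hp1 : p < 1) (hk : (n : ℝ) * p ≤ k) :
    AntitoneOn (binPMF n · p) (Set.Ici k) :=
  antitoneOn_nat_Ici_of_succ_le fun j hj => binPMF_succ_le_binPMF hp0 hp1 <| by
    have : (k : ℝ) ≤ j := by exact_mod_cast hj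
    linarith

lemma binPMF_le_of_mul_le_of_le_mul {n k : ℕ} (hp0 : 0 ≤ p) (hp1 : p < 1)
    (hlo : (n : ℝ) * p ≤ k) (hhi : (k : ℝ) ≤ (n + 1) * p) (j : ℕ) :
    binPMF n j p ≤ binPMF n k p := by
  rcases le_total j k with hjk | hkj
  · exact monotoneOn_binPMF_Iic hp0 hp1 hhi hjk Set.self_mem_Iic hjk
  · exact antitoneOn_binPMF_Ici hp0 hp1 hlo Set.self_mem_Ici hkj hkj

lemma le_of_forall_binPMF_le {n k : ℕ} (hp0 : 0 < p) (hp1 : p < 1)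
    (hmax : ∀ m, binPMF m k p ≤ binPMF n k p) : k ≤ n := by
  by_contra! hnk
  have := hmax k
  rw [binPMF_eq_zero_of_lt hnk] at this
  exact this.not_gt (binPMF_pos le_rfl hp0 hp1)

lemma le_mul_of_binPMF_succ_trials_le {n k : ℕ} (hp0 : 0 < p) (hp1 : p < 1) (hk : k ≤ n)
    (h : binPMF (n + 1) k p ≤ binPMF n k p) : (k : ℝ) ≤ (n + 1) * p := by
  have hpos := binPMF_pos hk hp0 hp1
  have hkn : (k : ℝ) ≤ n := by exact_mod_cast hk
  have : binPMF n k p * ((n + 1) * (1 - p)) ≤ binPMF n k p * ((n + 1) - k) := by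
    rw [← binPMF_succ_trials_mul]
    exact mul_le_mul_of_nonneg_right h (by linarith)
  linarith [le_of_mul_le_mul_left this hpos]

lemma mul_le_of_binPMF_le_succ_trials {n k : ℕ} (hp0 : 0 < p) (hp1 : p < 1) (hk : k ≤ n + 1)
    (h : binPMF n k p ≤ binPMF (n + 1) k p) : (n + 1) * p ≤ (k : ℝ) := by
  have hpos := binPMF_pos hk hp0 hp1
  have : binPMF (n + 1) k p * ((n + 1) - k) ≤ binPMF (n + 1) k p * ((n + 1) * (1 - p)) := by
    rw [binPMF_succ_trials_mul]
    exact mul_le_mul_of_nonneg_right h (by nlinarith)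
  linarith [le_of_mul_le_mul_left this hpos]

end binPMF

theorem stmt_2_general (p : ℝ) (hp : 0 < p) (hp1 : p < 1) (k : ℕ) (n : ℕ)
    (hmax : ∀ m : ℕ, binPMF m k p ≤ binPMF n k p) :
    ∀ j : ℕ, binPMF n j p ≤ binPMF n k p := by
  have hkn : k ≤ n := le_of_forall_binPMF_le hp hp1 hmax
  have hhi : (k : ℝ) ≤ (n + 1) * p := le_mul_of_binPMF_succ_trials_le hp hp1 hkn (hmax (n + 1))
  have hlo : (n : ℝ) * p ≤ k := by
    cases n with
    | zero => simp
    | succ m => exact_mod_cast mul_le_of_binPMF_le_succ_trials hp hp1 hkn (hmax m)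
  exact binPMF_le_of_mul_le_of_le_mul hp.le hp1 hlo hhi

/-- Cross modality of the binomial-n family: if n maximizes the likelihood
n ↦ f(k;n,p), then k is a mode of f(·;n,p). -/
theorem stmt_2 (p : ℝ) (hp : 0 < p) (hp1 : p < 1) (k : ℕ) (hk : 1 ≤ k) (n : ℕ)
    (hmax : ∀ m : ℕ, binPMF m k p ≤ binPMF n k p) :
    ∀ j : ℕ, binPMF n j p ≤ binPMF n k p :=
  stmt_2_general p hp hp1 k n hmax
end

section
/- For mutually prime positive integers a < b and any positive integer c, the identity C(cb-1, ca-1)·b·(b-a) = C(cb-1, ca)·a·b = C(cb, ca)·a·(b-a) holds. -/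
theorem stmt_4 (a b c : ℕ) (hab : Nat.Coprime a b) (ha : 0 < a) (hlt : a < b) (hc : 0 < c) :
    (c * b - 1).choose (c * a - 1) * b * (b - a) = (c * b - 1).choose (c * a) * a * b ∧
    (c * b - 1).choose (c * a) * a * b = (c * b).choose (c * a) * a * (b - a) := by
  have hca : 0 < c * a := Nat.mul_pos hc ha
  have hcb : c * a < c * b := (Nat.mul_lt_mul_left hc).mpr hlt
  have h1 : c * a - 1 + 1 = c * a := Nat.succ_pred_eq_of_pos hca
  have h2 : c * b - 1 - (c * a - 1) = c * (b - a) := by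
    rw [Nat.mul_sub]; omega
  have h := Nat.choose_succ_right_eq (c * b - 1) (c * a - 1)
  rw [h1, h2] at h
  have hkey : (c * b - 1).choose (c * a) * a = (c * b - 1).choose (c * a - 1) * (b - a) := by
    apply Nat.eq_of_mul_eq_mul_left hc
    calc c * ((c * b - 1).choose (c * a) * a)
        = (c * b - 1).choose (c * a) * (c * a) := by ring
      _ = (c * b - 1).choose (c * a - 1) * (c * (b - a)) := h
      _ = c * ((c * b - 1).choose (c * a - 1) * (b - a)) := by ring
  have hpascal : (c * b).choose (c * a) =
      (c * b - 1).choose (c * a - 1) + (c * b - 1).choose (c * a) := by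
    have hb1 : c * b = (c * b - 1) + 1 := by omega
    rw [hb1, ← h1, Nat.choose_succ_succ]; simp [h1]
  constructor
  · calc (c * b - 1).choose (c * a - 1) * b * (b - a)
        = (c * b - 1).choose (c * a - 1) * (b - a) * b := by ring
      _ = (c * b - 1).choose (c * a) * a * b := by rw [← hkey]
  · rw [hpascal]
    have hab' : a + (b - a) = b := by omega
    calc (c * b - 1).choose (c * a) * a * b
        = (c * b - 1).choose (c * a) * a * (a + (b - a)) := by rw [hab']
      _ = (c * b - 1).choose (c * a) * a * a
          + (c * b - 1).choose (c * a) * a * (b - a) := by ring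
      _ = (c * b - 1).choose (c * a - 1) * (b - a) * a
          + (c * b - 1).choose (c * a) * a * (b - a) := by rw [← hkey]
      _ = ((c * b - 1).choose (c * a - 1) + (c * b - 1).choose (c * a)) * a * (b - a) := by ring
end

section
/- For S a finite sum of independent Bernoulli(p_i) variables (i = 1,…,n), the probability function f(k) = P(S=k) is ultra log-concave: k f(k)² ≥ (k+1) f(k-1) f(k+1) for all k ≥ 1. -/
/-!
With `a k = k! * f k`, ultra log-concavity of `f` is log-concavity of `a`, and adding one
Bernoulli(`q`) variable turns `a` into `k ↦ q * k * a (k - 1) + (1 - q) * a k`. Log-concavity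
alone does not obviously survive this step (the `q * (1 - q)` term needs the inequality at lag
three), but its division-free strengthening `a i * a (j + 1) ≤ a (i + 1) * a j` for all `i ≤ j`
does: the coefficients of `q ^ 2`, `q * (1 - q)` and `(1 - q) ^ 2` in the new inequality are
nonnegative combinations of old instances. Induct on `n`, starting from the point mass at `0`.
-/

open Finset

/-- Probability function of a sum of n independent Bernoulli(p i) variables:
P(S = k) = Σ over k-subsets A of {0,…,n-1} of Π_{i∈A} p i · Π_{i∉A} (1 - p i). -/
noncomputable def pbPMF (n : ℕ) (p : ℕ → ℝ) (k : ℕ) : ℝ :=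
  ∑ A ∈ (Finset.range n).powersetCard k,
    (∏ i ∈ A, p i) * ∏ i ∈ Finset.range n \ A, (1 - p i)

/-- Probability function of X + Σ B_i with X ~ Poisson(λ) independent of the
Bernoulli variables. -/
noncomputable def epbPMF (lam : ℝ) (n : ℕ) (p : ℕ → ℝ) (k : ℕ) : ℝ :=
  ∑ j ∈ Finset.range (k + 1),
    Real.exp (-lam) * lam ^ (k - j) / (Nat.factorial (k - j)) * pbPMF n p j

open Nat

/-- Division-free form of `k ↦ a (k + 1) / a k` being antitone; for nonnegative `a` it means
log-concavity without internal zeros. -/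
def RatioAntitone {R : Type*} [Mul R] [LE R] (a : ℕ → R) : Prop :=
  ∀ i j, i ≤ j → a i * a (j + 1) ≤ a (i + 1) * a j

namespace RatioAntitone

variable {R : Type*} [CommRing R] [LinearOrder R] [IsStrictOrderedRing R] {a : ℕ → R}

theorem bernoulli_step (ha : RatioAntitone a) (ha0 : ∀ k, 0 ≤ a k) {q : R} (hq0 : 0 ≤ q)
    (hq1 : q ≤ 1) : RatioAntitone fun k => q * k * a (k - 1) + (1 - q) * a k := by
  intro i j hij
  rcases hij.eq_or_lt with rfl | hij
  · exact le_of_eq (by ring)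
  obtain ⟨l, rfl⟩ : ∃ l, j = l + 1 := ⟨j - 1, by omega⟩
  have hil : i ≤ l := by omega
  have h_shift :
      (i : R) * (l + 2) * (a (i - 1) * a (l + 1)) ≤ (i + 1) * (l + 1) * (a i * a l) := by
    rcases i with _ | i
    · simp only [CharP.cast_eq_zero, zero_mul, zero_add, one_mul]
      exact mul_nonneg (by positivity) (mul_nonneg (ha0 _) (ha0 _))
    · have hcoef : ((i + 1 : ℕ) : R) * (l + 2) ≤ ((i + 1 : ℕ) + 1) * (l + 1) := by
        have : (i : R) + 1 ≤ l := by exact_mod_cast hil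
        push_cast; linarith
      exact mul_le_mul hcoef (ha i l (by omega)) (mul_nonneg (ha0 _) (ha0 _)) (by positivity)
  have h_mixed : (i : R) * (a (i - 1) * a (l + 2)) ≤ i * (a i * a (l + 1)) := by
    rcases i with _ | i
    · simp
    · exact mul_le_mul_of_nonneg_left (ha i (l + 1) (by omega)) (by positivity)
  have h_mixed' : ((l : R) + 1) * (a i * a (l + 1)) ≤ (l + 1) * (a (i + 1) * a l) :=
    mul_le_mul_of_nonneg_left (ha i l hil) (by positivity)
  have h_plain := ha i (l + 1) (by omega)
  have hq : 0 ≤ q * (1 - q) := mul_nonneg hq0 (by linarith)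
  simp only [Nat.add_sub_cancel, Nat.cast_add, Nat.cast_one]
  linarith [mul_le_mul_of_nonneg_left h_shift (sq_nonneg q),
    mul_le_mul_of_nonneg_left (add_le_add h_mixed h_mixed') hq,
    mul_le_mul_of_nonneg_left h_plain (sq_nonneg (1 - q))]

end RatioAntitone

theorem ultraLogConcave_of_ratioAntitone_factorial_mul {R : Type*} [CommRing R] [LinearOrder R]
    [IsStrictOrderedRing R] {f : ℕ → R} (h : RatioAntitone fun k => (k ! : R) * f k) {k : ℕ}
    (hk : 1 ≤ k) : (k + 1 : R) * f (k - 1) * f (k + 1) ≤ k * f k ^ 2 := by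
  obtain ⟨m, rfl⟩ : ∃ m, k = m + 1 := ⟨k - 1, by omega⟩
  have hm := h m (m + 1) (by omega)
  simp only [Nat.factorial_succ, Nat.cast_mul, Nat.cast_add, Nat.cast_one] at hm
  have hpos : (0 : R) < m ! * ((m + 1) * m !) := by positivity
  rw [Nat.add_sub_cancel]
  push_cast
  refine le_of_mul_le_mul_left ?_ hpos
  linarith

section PoissonBinomial

variable (n : ℕ) (p : ℕ → ℝ)

theorem pbPMF_nonneg (hp : ∀ i, 0 ≤ p i ∧ p i ≤ 1) (k : ℕ) : 0 ≤ pbPMF n p k :=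
  sum_nonneg fun _ _ => mul_nonneg (prod_nonneg fun i _ => (hp i).1)
    (prod_nonneg fun i _ => sub_nonneg.2 (hp i).2)

theorem pbPMF_zero_succ (k : ℕ) : pbPMF 0 p (k + 1) = 0 := by
  rw [pbPMF, powersetCard_eq_empty.2 (by simp), sum_empty]

theorem pbPMF_succ_zero : pbPMF (n + 1) p 0 = (1 - p n) * pbPMF n p 0 := by
  simp [pbPMF, prod_range_succ, mul_comm]

theorem pbPMF_succ_succ (k : ℕ) :
    pbPMF (n + 1) p (k + 1) = p n * pbPMF n p k + (1 - p n) * pbPMF n p (k + 1) := by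
  have hn : n ∉ range n := notMem_range_self
  have hnA : ∀ {j A}, A ∈ (range n).powersetCard j → n ∉ A := fun hA h =>
    hn ((mem_powersetCard.1 hA).1 h)
  have hdisj :
      Disjoint ((range n).powersetCard (k + 1)) (((range n).powersetCard k).image (insert n)) := by
    refine disjoint_left.2 fun A hA hA' => ?_
    obtain ⟨B, -, rfl⟩ := mem_image.1 hA'
    exact hnA hA (mem_insert_self n B)
  have hinj : Set.InjOn (insert n) ((range n).powersetCard k : Set (Finset ℕ)) :=
    fun A hA B hB hAB => by rw [← erase_insert (hnA hA), hAB, erase_insert (hnA hB)]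
  rw [pbPMF, range_add_one, powersetCard_succ_insert hn, sum_union hdisj, sum_image hinj, add_comm,
    pbPMF, pbPMF, mul_sum, mul_sum]
  congr 1
  · refine sum_congr rfl fun A hA => ?_
    rw [prod_insert (hnA hA), insert_sdiff_insert, sdiff_insert_of_notMem hn]
    ring
  · refine sum_congr rfl fun A hA => ?_
    rw [insert_sdiff_of_notMem _ (hnA hA), prod_insert (fun h => hn (mem_sdiff.1 h).1)]
    ring

theorem factorial_mul_pbPMF_succ (k : ℕ) :
    k ! * pbPMF (n + 1) p k =
      p n * k * ((k - 1)! * pbPMF n p (k - 1)) + (1 - p n) * (k ! * pbPMF n p k) := by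
  cases k with
  | zero => simp [pbPMF_succ_zero]
  | succ k =>
    rw [pbPMF_succ_succ, Nat.add_sub_cancel, Nat.factorial_succ]
    push_cast
    ring

theorem ratioAntitone_factorial_mul_pbPMF (hp : ∀ i, 0 ≤ p i ∧ p i ≤ 1) :
    RatioAntitone fun k => (k ! : ℝ) * pbPMF n p k := by
  induction n with
  | zero =>
    intro i j _
    simp [pbPMF_zero_succ]
  | succ n ih =>
    simp_rw [factorial_mul_pbPMF_succ]
    exact ih.bernoulli_step (fun k => mul_nonneg (by positivity) (pbPMF_nonneg n p hp k))
      (hp n).1 (hp n).2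

end PoissonBinomial

/-- Ultra log-concavity of the Poisson-binomial probability function. -/
theorem stmt_15 (n : ℕ) (p : ℕ → ℝ) (hp : ∀ i, 0 ≤ p i ∧ p i ≤ 1) :
    ∀ k : ℕ, 1 ≤ k →
      ((k + 1 : ℝ)) * pbPMF n p (k - 1) * pbPMF n p (k + 1) ≤ (k : ℝ) * (pbPMF n p k) ^ 2 :=
  fun _ hk =>
    ultraLogConcave_of_ratioAntitone_factorial_mul (ratioAntitone_factorial_mul_pbPMF n p hp) hk
end

section
/- Mean-mode rule (Darroch/Samuels, finitary case): let S = Σ_{i=1}^n B_i with independent Bernoulli(p_i) terms and mean μ = Σ p_i. If k < μ < k+1 for an integer k ≥ 0, then every mode m of S satisfies k ≤ m ≤ k+1. -/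
open Finset

/-! ### Auxiliary development: generalized Poisson-binomial mass function -/

/-- Poisson-binomial probability over an arbitrary index set, with `ℤ`-valued index. -/
noncomputable def gpb (p : ℕ → ℝ) (s : Finset ℕ) (z : ℤ) : ℝ :=
  if 0 ≤ z then
    ∑ A ∈ s.powersetCard z.toNat, (∏ i ∈ A, p i) * ∏ i ∈ s \ A, (1 - p i)
  else 0

lemma gpb_neg (p : ℕ → ℝ) (s : Finset ℕ) {z : ℤ} (h : z < 0) : gpb p s z = 0 := by
  simp [gpb, not_le.mpr h]

lemma gpb_natCast (p : ℕ → ℝ) (s : Finset ℕ) (k : ℕ) :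
    gpb p s (k : ℤ) = ∑ A ∈ s.powersetCard k, (∏ i ∈ A, p i) * ∏ i ∈ s \ A, (1 - p i) := by
  simp [gpb]

lemma gpb_nonneg (p : ℕ → ℝ) (hp : ∀ i, 0 ≤ p i ∧ p i ≤ 1) (s : Finset ℕ) (z : ℤ) :
    0 ≤ gpb p s z := by
  unfold gpb
  split
  · refine Finset.sum_nonneg fun A _ => mul_nonneg ?_ ?_
    · exact Finset.prod_nonneg fun i _ => (hp i).1
    · exact Finset.prod_nonneg fun i _ => by linarith [(hp i).2]
  · exact le_refl 0

lemma gpb_of_card_lt (p : ℕ → ℝ) (s : Finset ℕ) {z : ℤ} (h : (s.card : ℤ) < z) :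
    gpb p s z = 0 := by
  have h0 : 0 ≤ z := le_trans (Int.ofNat_nonneg _) h.le
  have : s.card < z.toNat := by omega
  simp [gpb, h0, Finset.powersetCard_eq_empty.mpr this]

lemma gpb_empty (p : ℕ → ℝ) (z : ℤ) : gpb p ∅ z = if z = 0 then 1 else 0 := by
  rcases lt_trichotomy z 0 with h | h | h
  · rw [gpb_neg _ _ h, if_neg (by omega)]
  · subst h; simp [gpb]
  · rw [gpb_of_card_lt p ∅ (by simpa using h), if_neg (by omega)]

lemma gpb_rec (p : ℕ → ℝ) {s : Finset ℕ} {i : ℕ} (hi : i ∈ s) (z : ℤ) :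
    gpb p s z = (1 - p i) * gpb p (s.erase i) z + p i * gpb p (s.erase i) (z - 1) := by
  rcases lt_trichotomy z 0 with hz | hz | hz
  · rw [gpb_neg _ _ hz, gpb_neg _ _ hz, gpb_neg _ _ (by omega)]; ring
  · subst hz
    rw [gpb_neg _ _ (by norm_num : (0:ℤ) - 1 < 0)]
    simp only [gpb, le_refl, if_pos, Int.toNat_zero, powersetCard_zero, sum_singleton,
      prod_empty, sdiff_empty, one_mul, mul_zero, add_zero]
    exact (Finset.mul_prod_erase s (fun j => 1 - p j) hi).symm
  · have h1 : (0:ℤ) ≤ z := hz.le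
    have h2 : (0:ℤ) ≤ z - 1 := by omega
    obtain ⟨k, hk⟩ : ∃ k : ℕ, z.toNat = k + 1 := ⟨(z-1).toNat, by omega⟩
    have hk2 : (z - 1).toNat = k := by omega
    have hins : s = insert i (s.erase i) := (Finset.insert_erase hi).symm
    have hni : i ∉ s.erase i := Finset.notMem_erase i s
    simp only [gpb, if_pos h1, if_pos h2, hk, hk2]
    conv_lhs => rw [hins]
    rw [Finset.powersetCard_succ_insert hni k, Finset.sum_union]
    · congr 1
      · -- subsets not containing i
        rw [Finset.mul_sum]
        apply Finset.sum_congr rfl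
        intro A hA
        rw [Finset.mem_powersetCard] at hA
        have hiA : i ∉ A := fun h => hni (hA.1 h)
        have hmem : i ∈ insert i (s.erase i) \ A := by
          simp [Finset.mem_sdiff, hiA]
        rw [← Finset.mul_prod_erase _ _ hmem]
        have : (insert i (s.erase i) \ A).erase i = s.erase i \ A := by
          rw [← Finset.erase_sdiff_comm, Finset.erase_insert hni]
        rw [this]; ring
      · -- subsets containing i
        rw [Finset.sum_image, Finset.mul_sum]
        · apply Finset.sum_congr rfl
          intro B hB
          rw [Finset.mem_powersetCard] at hB
          have hiB : i ∉ B := fun h => hni (hB.1 h)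
          rw [Finset.prod_insert hiB]
          have : insert i (s.erase i) \ insert i B = s.erase i \ B := by
            rw [Finset.sdiff_insert, ← Finset.erase_sdiff_comm, Finset.erase_insert hni]
          rw [this]; ring
        · intro B1 h1' B2 h2' he
          rw [Finset.mem_coe, Finset.mem_powersetCard] at h1' h2'
          have : i ∉ B1 := fun h => hni (h1'.1 h)
          have h2i : i ∉ B2 := fun h => hni (h2'.1 h)
          rw [← Finset.erase_insert this, he, Finset.erase_insert h2i]
    · rw [Finset.disjoint_left]
      intro A hA hA2
      rw [Finset.mem_powersetCard] at hA
      rw [Finset.mem_image] at hA2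
      obtain ⟨B, _, rfl⟩ := hA2
      exact hni (hA.1 (mem_insert_self i B))

lemma gpb_sum (p : ℕ → ℝ) (s : Finset ℕ) :
    ∑ k ∈ Finset.range (s.card + 1), gpb p s (k : ℤ) = 1 := by
  classical
  induction s using Finset.induction_on with
  | empty => simp [gpb_empty]
  | @insert a s ha ih =>
    have hrec : ∀ k : ℤ, gpb p (insert a s) k
        = (1 - p a) * gpb p s k + p a * gpb p s (k - 1) := by
      intro k
      have := gpb_rec p (Finset.mem_insert_self a s) k
      rwa [Finset.erase_insert ha] at this
    rw [Finset.card_insert_of_notMem ha]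
    have hsplit : ∑ k ∈ Finset.range (s.card + 1 + 1), gpb p (insert a s) (k : ℤ)
        = (1 - p a) * ∑ k ∈ Finset.range (s.card + 1 + 1), gpb p s (k : ℤ)
          + p a * ∑ k ∈ Finset.range (s.card + 1 + 1), gpb p s ((k : ℤ) - 1) := by
      rw [Finset.mul_sum, Finset.mul_sum, ← Finset.sum_add_distrib]
      exact Finset.sum_congr rfl fun k _ => hrec k
    rw [hsplit]
    have h1 : ∑ k ∈ Finset.range (s.card + 1 + 1), gpb p s (k : ℤ)
        = ∑ k ∈ Finset.range (s.card + 1), gpb p s (k : ℤ) := by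
      rw [Finset.sum_range_succ, gpb_of_card_lt p s (by exact_mod_cast by omega), add_zero]
    have h2 : ∑ k ∈ Finset.range (s.card + 1 + 1), gpb p s ((k : ℤ) - 1)
        = ∑ k ∈ Finset.range (s.card + 1), gpb p s (k : ℤ) := by
      rw [Finset.sum_range_succ']
      have : ∀ k : ℕ, ((k + 1 : ℕ) : ℤ) - 1 = (k : ℤ) := by intro k; push_cast; ring
      simp only [this]
      rw [gpb_neg p s (by norm_num : ((0:ℕ) : ℤ) - 1 < 0), add_zero]
    rw [h1, h2, ih]; ring

lemma gpb_mean (p : ℕ → ℝ) (s : Finset ℕ) :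
    ∑ k ∈ Finset.range (s.card + 1), (k : ℝ) * gpb p s (k : ℤ) = ∑ i ∈ s, p i := by
  classical
  induction s using Finset.induction_on with
  | empty => simp
  | @insert a s ha ih =>
    have hrec : ∀ k : ℤ, gpb p (insert a s) k
        = (1 - p a) * gpb p s k + p a * gpb p s (k - 1) := by
      intro k
      have := gpb_rec p (Finset.mem_insert_self a s) k
      rwa [Finset.erase_insert ha] at this
    rw [Finset.card_insert_of_notMem ha, Finset.sum_insert ha, ← ih]
    have hsplit : ∑ k ∈ Finset.range (s.card + 1 + 1), (k:ℝ) * gpb p (insert a s) (k : ℤ)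
        = (1 - p a) * ∑ k ∈ Finset.range (s.card + 1 + 1), (k:ℝ) * gpb p s (k : ℤ)
          + p a * ∑ k ∈ Finset.range (s.card + 1 + 1), (k:ℝ) * gpb p s ((k : ℤ) - 1) := by
      rw [Finset.mul_sum, Finset.mul_sum, ← Finset.sum_add_distrib]
      refine Finset.sum_congr rfl fun k _ => ?_
      rw [hrec (k:ℤ)]; ring
    rw [hsplit]
    have h1 : ∑ k ∈ Finset.range (s.card + 1 + 1), (k:ℝ) * gpb p s (k : ℤ)
        = ∑ k ∈ Finset.range (s.card + 1), (k:ℝ) * gpb p s (k : ℤ) := by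
      rw [Finset.sum_range_succ, gpb_of_card_lt p s (by exact_mod_cast by omega), mul_zero,
        add_zero]
    have h2 : ∑ k ∈ Finset.range (s.card + 1 + 1), (k:ℝ) * gpb p s ((k : ℤ) - 1)
        = ∑ k ∈ Finset.range (s.card + 1), (k:ℝ) * gpb p s (k : ℤ)
          + ∑ k ∈ Finset.range (s.card + 1), gpb p s (k : ℤ) := by
      rw [Finset.sum_range_succ']
      have hc : ∀ k : ℕ, ((k + 1 : ℕ) : ℤ) - 1 = (k : ℤ) := by intro k; push_cast; ring
      simp only [hc]
      rw [gpb_neg p s (by norm_num : ((0:ℕ) : ℤ) - 1 < 0), mul_zero, add_zero,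
        ← Finset.sum_add_distrib]
      refine Finset.sum_congr rfl fun k _ => ?_
      push_cast; ring
    rw [h1, h2, gpb_sum p s]; ring

/-- Generalized log-concavity (Newton-type) of the Poisson-binomial mass function. -/
lemma gpb_glc (p : ℕ → ℝ) (hp : ∀ i, 0 ≤ p i ∧ p i ≤ 1) (s : Finset ℕ) :
    ∀ z w : ℤ, z ≤ w → gpb p s (z - 1) * gpb p s (w + 1) ≤ gpb p s z * gpb p s w := by
  classical
  induction s using Finset.induction_on with
  | empty =>
    intro z w hzw
    simp only [gpb_empty]
    split_ifs <;> first | (exfalso; omega) | norm_num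
  | @insert a s ha ih =>
    intro z w hzw
    have hrec : ∀ k : ℤ, gpb p (insert a s) k
        = (1 - p a) * gpb p s k + p a * gpb p s (k - 1) := by
      intro k
      have := gpb_rec p (Finset.mem_insert_self a s) k
      rwa [Finset.erase_insert ha] at this
    have hq : (0:ℝ) ≤ 1 - p a := by linarith [(hp a).2]
    have hP : (0:ℝ) ≤ p a := (hp a).1
    have h1 : gpb p s (z-1) * gpb p s (w+1) ≤ gpb p s z * gpb p s w := ih z w hzw
    have h2 : gpb p s (z-1-1) * gpb p s w ≤ gpb p s (z-1) * gpb p s (w-1) := by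
      have h := ih (z-1) (w-1) (by omega)
      have e : (w - 1 + 1 : ℤ) = w := by ring
      rwa [e] at h
    have h3 : gpb p s (z-1-1) * gpb p s (w+1) ≤ gpb p s (z-1) * gpb p s w := by
      have := ih (z-1) w (by omega)
      convert this using 3 <;> ring
    have h4 : gpb p s (z-1) * gpb p s w ≤ gpb p s z * gpb p s (w-1) := by
      rcases eq_or_lt_of_le hzw with h | h
      · subst h; exact le_of_eq (by ring)
      · have := ih z (w-1) (by omega)
        convert this using 3 <;> ring
    have h34 : gpb p s (z-1-1) * gpb p s (w+1) ≤ gpb p s z * gpb p s (w-1) := h3.trans h4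
    rw [hrec (z-1), hrec (w+1), hrec z, hrec w]
    have e1 : (w + 1 - 1 : ℤ) = w := by ring
    rw [e1]
    nlinarith [mul_le_mul_of_nonneg_left h1 (mul_nonneg hq hq),
      mul_le_mul_of_nonneg_left h2 (mul_nonneg hP hP),
      mul_le_mul_of_nonneg_left h34 (mul_nonneg hq hP)]

/-- Counting identity: `(m+1) P(S = m+1) = Σ_i p_i P(S - B_i = m)`. -/
lemma gpb_ident (p : ℕ → ℝ) (s : Finset ℕ) (m : ℕ) :
    ((m : ℝ) + 1) * gpb p s ((m : ℤ) + 1) = ∑ i ∈ s, p i * gpb p (s.erase i) (m : ℤ) := by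
  classical
  have hz : ((m:ℤ) + 1) = ((m + 1 : ℕ) : ℤ) := by push_cast; ring
  rw [hz, gpb_natCast]
  have step1 : ∀ i ∈ s, p i * gpb p (s.erase i) (m : ℤ)
      = ∑ A ∈ (s.powersetCard (m+1)).filter (fun A => i ∈ A),
          (∏ j ∈ A, p j) * ∏ j ∈ s \ A, (1 - p j) := by
    intro i hi
    rw [gpb_natCast, Finset.mul_sum]
    refine Finset.sum_bij' (fun B _ => insert i B) (fun A _ => A.erase i) ?_ ?_ ?_ ?_ ?_
    · intro B hB
      rw [Finset.mem_powersetCard] at hB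
      have hiB : i ∉ B := fun h => (Finset.notMem_erase i s) (hB.1 h)
      rw [Finset.mem_filter, Finset.mem_powersetCard]
      refine ⟨⟨?_, ?_⟩, Finset.mem_insert_self i B⟩
      · intro j hj
        rcases Finset.mem_insert.mp hj with rfl | hj
        · exact hi
        · exact Finset.mem_of_mem_erase (hB.1 hj)
      · rw [Finset.card_insert_of_notMem hiB, hB.2]
    · intro A hA
      rw [Finset.mem_filter, Finset.mem_powersetCard] at hA
      rw [Finset.mem_powersetCard]
      constructor
      · intro j hj
        rw [Finset.mem_erase] at hj ⊢
        exact ⟨hj.1, hA.1.1 hj.2⟩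
      · rw [Finset.card_erase_of_mem hA.2, hA.1.2]; rfl
    · intro B hB
      rw [Finset.mem_powersetCard] at hB
      have hiB : i ∉ B := fun h => (Finset.notMem_erase i s) (hB.1 h)
      rw [Finset.erase_insert hiB]
    · intro A hA
      rw [Finset.mem_filter] at hA
      rw [Finset.insert_erase hA.2]
    · intro B hB
      rw [Finset.mem_powersetCard] at hB
      have hiB : i ∉ B := fun h => (Finset.notMem_erase i s) (hB.1 h)
      rw [Finset.prod_insert hiB]
      have hsd : s \ insert i B = s.erase i \ B := by
        rw [Finset.sdiff_insert, ← Finset.erase_sdiff_comm]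
      rw [hsd]; ring
  rw [Finset.sum_congr rfl step1]
  simp only [Finset.sum_filter]
  rw [Finset.sum_comm]
  rw [Finset.mul_sum]
  refine Finset.sum_congr rfl ?_
  intro A hA
  rw [Finset.mem_powersetCard] at hA
  rw [Finset.sum_ite_mem, Finset.inter_eq_right.mpr hA.1, Finset.sum_const, hA.2]
  push_cast
  ring

/-- Key comparison: if the convolution with a Bernoulli does not increase at a point
with positive mass, neither does the underlying log-concave sequence. -/
lemma lemE {x y z P : ℝ} (hy : 0 ≤ y) (hz : 0 ≤ z)
    (hP0 : 0 ≤ P) (hP1 : P ≤ 1) (hLC : x * z ≤ y * y)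
    (hmode : (1 - P) * z + P * y ≤ (1 - P) * y + P * x)
    (hpos : 0 < (1 - P) * z + P * y) : z ≤ y := by
  by_contra h
  push_neg at h
  have hz0 : 0 < z := lt_of_le_of_lt hy h
  rcases lt_or_eq_of_le hP1 with hP | hP
  · have hxy : x ≤ y := by
      rcases eq_or_lt_of_le hy with hy0 | hy0
      · nlinarith
      · nlinarith
    nlinarith
  · subst hP
    simp only [sub_self, zero_mul, zero_add] at hmode hpos
    nlinarith

lemma mode_pos (p : ℕ → ℝ) (s : Finset ℕ) (m : ℕ)
    (hm : ∀ z : ℤ, gpb p s z ≤ gpb p s (m : ℤ)) : 0 < gpb p s (m : ℤ) := by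
  have hsum := gpb_sum p s
  have hle : (1:ℝ) ≤ (s.card + 1 : ℕ) • gpb p s (m : ℤ) := by
    rw [← hsum]
    have := Finset.sum_le_card_nsmul (Finset.range (s.card + 1))
      (fun k => gpb p s (k : ℤ)) (gpb p s (m : ℤ)) (fun k _ => hm k)
    simpa using this
  rw [nsmul_eq_mul] at hle
  by_contra h
  push_neg at h
  have : ((s.card + 1 : ℕ) : ℝ) * gpb p s (m : ℤ) ≤ 0 :=
    mul_nonpos_of_nonneg_of_nonpos (by positivity) h
  linarith

/-- Darroch's key lemma: any mode `m` satisfies `μ ≤ m + 1`. -/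
lemma darroch_one (p : ℕ → ℝ) (hp : ∀ i, 0 ≤ p i ∧ p i ≤ 1) (s : Finset ℕ) (m : ℕ)
    (hm : ∀ z : ℤ, gpb p s z ≤ gpb p s (m : ℤ)) :
    ∑ i ∈ s, p i ≤ (m : ℝ) + 1 := by
  by_cases hpos : 0 < gpb p s ((m : ℤ) + 1)
  · have key : ∀ i ∈ s, gpb p s ((m:ℤ)+1) ≤ gpb p (s.erase i) (m:ℤ) := by
      intro i hi
      have hreca := gpb_rec p hi ((m:ℤ)+1)
      have e1 : ((m:ℤ) + 1 - 1) = (m:ℤ) := by ring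
      rw [e1] at hreca
      have hrecb := gpb_rec p hi (m:ℤ)
      have hLC : gpb p (s.erase i) ((m:ℤ)-1) * gpb p (s.erase i) ((m:ℤ)+1)
          ≤ gpb p (s.erase i) (m:ℤ) * gpb p (s.erase i) (m:ℤ) :=
        gpb_glc p hp (s.erase i) (m:ℤ) (m:ℤ) le_rfl
      have hmode : gpb p s ((m:ℤ)+1) ≤ gpb p s (m:ℤ) := hm _
      have htm : gpb p (s.erase i) ((m:ℤ)+1) ≤ gpb p (s.erase i) (m:ℤ) := by
        refine lemE (x := gpb p (s.erase i) ((m:ℤ)-1)) (y := gpb p (s.erase i) (m:ℤ))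
          (z := gpb p (s.erase i) ((m:ℤ)+1)) (P := p i)
          (gpb_nonneg p hp _ _) (gpb_nonneg p hp _ _)
          (hp i).1 (hp i).2 hLC ?_ ?_
        · rw [← hreca, ← hrecb]; exact hmode
        · rw [← hreca]; exact hpos
      calc gpb p s ((m:ℤ)+1)
          = (1 - p i) * gpb p (s.erase i) ((m:ℤ)+1) + p i * gpb p (s.erase i) (m:ℤ) := hreca
        _ ≤ (1 - p i) * gpb p (s.erase i) (m:ℤ) + p i * gpb p (s.erase i) (m:ℤ) := by
            have : (0:ℝ) ≤ 1 - p i := by linarith [(hp i).2]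
            nlinarith
        _ = gpb p (s.erase i) (m:ℤ) := by ring
    have hstep : (∑ i ∈ s, p i) * gpb p s ((m:ℤ)+1) ≤ ((m:ℝ)+1) * gpb p s ((m:ℤ)+1) := by
      rw [gpb_ident, Finset.sum_mul]
      exact Finset.sum_le_sum fun i hi =>
        mul_le_mul_of_nonneg_left (key i hi) (hp i).1
    exact le_of_mul_le_mul_right hstep hpos
  · have hzero : gpb p s ((m:ℤ)+1) = 0 :=
      le_antisymm (not_lt.mp hpos) (gpb_nonneg p hp s _)
    have hvanish : ∀ z : ℤ, (m:ℤ) + 1 ≤ z → gpb p s z = 0 := by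
      intro z hzm
      rcases eq_or_lt_of_le hzm with h | h
      · rw [← h]; exact hzero
      · have hmpos : 0 < gpb p s (m : ℤ) := mode_pos p s m hm
        have hglc := gpb_glc p hp s ((m:ℤ)+1) (z-1) (by omega)
        have e1 : ((m:ℤ) + 1 - 1) = (m:ℤ) := by ring
        have e2 : (z - 1 + 1 : ℤ) = z := by ring
        rw [e1, e2, hzero, zero_mul] at hglc
        have h0 := gpb_nonneg p hp s z
        nlinarith
    have hmean := gpb_mean p s
    have hbound : ∑ k ∈ Finset.range (s.card + 1), (k : ℝ) * gpb p s (k : ℤ)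
        ≤ ∑ k ∈ Finset.range (s.card + 1), (m : ℝ) * gpb p s (k : ℤ) := by
      refine Finset.sum_le_sum ?_
      intro k _
      rcases le_or_gt (k : ℤ) (m : ℤ) with hk | hk
      · exact mul_le_mul_of_nonneg_right (by exact_mod_cast hk) (gpb_nonneg p hp s _)
      · rw [hvanish k (by omega)]; ring_nf; exact le_refl 0
    rw [hmean] at hbound
    rw [← Finset.mul_sum, gpb_sum p s, mul_one] at hbound
    linarith

lemma darroch_mode_le_card (p : ℕ → ℝ) (s : Finset ℕ) (m : ℕ)
    (hm : ∀ z : ℤ, gpb p s z ≤ gpb p s (m : ℤ)) : m ≤ s.card := by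
  by_contra h
  push_neg at h
  have := mode_pos p s m hm
  rw [gpb_of_card_lt p s (by exact_mod_cast h)] at this
  exact lt_irrefl 0 this

/-- Reflection: complementing all the probabilities reverses the mass function. -/
lemma gpb_compl (p : ℕ → ℝ) (s : Finset ℕ) (z : ℤ) :
    gpb (fun i => 1 - p i) s z = gpb p s ((s.card : ℤ) - z) := by
  classical
  rcases lt_or_ge z 0 with hz | hz
  · rw [gpb_neg _ _ hz, gpb_of_card_lt p s (by omega)]
  rcases lt_or_ge (s.card : ℤ) z with hz2 | hz2
  · rw [gpb_of_card_lt _ s hz2, gpb_neg p s (by omega)]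
  obtain ⟨k, rfl⟩ : ∃ k : ℕ, z = (k : ℤ) := ⟨z.toNat, (Int.toNat_of_nonneg hz).symm⟩
  have hk : k ≤ s.card := by exact_mod_cast hz2
  have e : (s.card : ℤ) - (k : ℤ) = ((s.card - k : ℕ) : ℤ) := by
    rw [Nat.cast_sub hk]
  rw [e, gpb_natCast, gpb_natCast]
  refine Finset.sum_bij' (fun A _ => s \ A) (fun B _ => s \ B) ?_ ?_ ?_ ?_ ?_
  · intro A hA
    rw [Finset.mem_powersetCard] at hA ⊢
    exact ⟨Finset.sdiff_subset, by rw [Finset.card_sdiff_of_subset hA.1, hA.2]⟩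
  · intro B hB
    rw [Finset.mem_powersetCard] at hB ⊢
    refine ⟨Finset.sdiff_subset, ?_⟩
    rw [Finset.card_sdiff_of_subset hB.1, hB.2]
    omega
  · intro A hA
    rw [Finset.mem_powersetCard] at hA
    rw [Finset.sdiff_sdiff_eq_self hA.1]
  · intro B hB
    rw [Finset.mem_powersetCard] at hB
    rw [Finset.sdiff_sdiff_eq_self hB.1]
  · intro A hA
    rw [Finset.mem_powersetCard] at hA
    rw [Finset.sdiff_sdiff_eq_self hA.1]
    have : ∏ i ∈ s \ A, (1 - (1 - p i)) = ∏ i ∈ s \ A, p i :=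
      Finset.prod_congr rfl fun i _ => by ring
    rw [this]
    ring

lemma pbPMF_eq_gpb (n : ℕ) (p : ℕ → ℝ) (k : ℕ) :
    pbPMF n p k = gpb p (Finset.range n) (k : ℤ) := by
  rw [gpb_natCast]; rfl

/-- Darroch's rule: if k < μ < k+1 then every mode m of the Poisson-binomial
distribution satisfies k ≤ m ≤ k+1. -/
theorem stmt_17 (n : ℕ) (p : ℕ → ℝ) (hp : ∀ i, 0 ≤ p i ∧ p i ≤ 1) (k : ℕ)
    (h1 : (k : ℝ) < ∑ i ∈ Finset.range n, p i)
    (h2 : (∑ i ∈ Finset.range n, p i) < (k : ℝ) + 1) :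
    ∀ m : ℕ, (∀ j : ℕ, pbPMF n p j ≤ pbPMF n p m) → k ≤ m ∧ m ≤ k + 1 := by
  intro m hmode
  set s := Finset.range n with hs
  have hcard : s.card = n := Finset.card_range n
  have hmz : ∀ z : ℤ, gpb p s z ≤ gpb p s (m : ℤ) := by
    intro z
    rcases lt_or_ge z 0 with h | h
    · rw [gpb_neg p s h]
      exact gpb_nonneg p hp s _
    · have hz : z = ((z.toNat : ℕ) : ℤ) := (Int.toNat_of_nonneg h).symm
      rw [hz, ← pbPMF_eq_gpb, ← pbPMF_eq_gpb]
      exact hmode z.toNat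
  have hone := darroch_one p hp s m hmz
  have hmn : m ≤ n := by
    have := darroch_mode_le_card p s m hmz
    rwa [hcard] at this
  constructor
  · have : (k : ℝ) < (m : ℝ) + 1 := lt_of_lt_of_le h1 hone
    have : k < m + 1 := by exact_mod_cast this
    omega
  · -- complement argument
    set p' : ℕ → ℝ := fun i => 1 - p i with hp'def
    have hp' : ∀ i, 0 ≤ p' i ∧ p' i ≤ 1 := by
      intro i
      constructor
      · simp only [hp'def]; linarith [(hp i).2]
      · simp only [hp'def]; linarith [(hp i).1]
    have hcast : ((n - m : ℕ) : ℤ) = (n : ℤ) - (m : ℤ) := by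
      rw [Nat.cast_sub hmn]
    have hm' : ∀ z : ℤ, gpb p' s z ≤ gpb p' s ((n - m : ℕ) : ℤ) := by
      intro z
      rw [gpb_compl, gpb_compl, hcard, hcast]
      have e : (n : ℤ) - ((n : ℤ) - (m : ℤ)) = (m : ℤ) := by ring
      rw [e]
      exact hmz _
    have hone' := darroch_one p' hp' s (n - m) hm'
    have hsum' : ∑ i ∈ s, p' i = (n : ℝ) - ∑ i ∈ s, p i := by
      simp only [hp'def]
      rw [Finset.sum_sub_distrib, Finset.sum_const, hcard]
      simp
    rw [hsum'] at hone'
    have hcastR : ((n - m : ℕ) : ℝ) = (n : ℝ) - (m : ℝ) := by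
      rw [Nat.cast_sub hmn]
    rw [hcastR] at hone'
    -- n - μ ≤ n - m + 1, so m ≤ μ + 1 < k + 2
    have : (m : ℝ) < (k : ℝ) + 2 := by linarith
    have : m < k + 2 := by exact_mod_cast this
    omega
end

section
/- If S = Σ_{i=1}^n B_i is a sum of independent Bernoulli(p_i) variables with integer mean μ = Σ p_i = k, and not all p_i ∈ {0,1}, then k is the unique mode of S: P(S = k) > P(S = j) for all j ≠ k. -/
/-!
Hoeffding's extremal argument. Fix `j ≠ k` and minimise `P(S = k) - P(S = j)` over the compact
set of probability vectors with sum `k`. A coordinate equal to `0` or `1` can be dropped (shifting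
`k` and `j` by one in the second case), which is the induction on the number of variables. If a
minimiser has two coordinates `x ≠ y`, then with `x + y` fixed the objective is affine in `x * y`:
either averaging them strictly lowers it, contradicting minimality, or pushing one of them to `0`
or `1` does not raise it. What remains is a binomial law with integer mean `k = N c`, whose terms
increase strictly up to `k` and decrease strictly after it.
-/
open Finset

open Polynomial

theorem choose_mul_pow_mul_pow_succ {N i : ℕ} (hi : i < N) (c : ℝ) :
    N.choose (i + 1) * c ^ (i + 1) * (1 - c) ^ (N - (i + 1)) * ((i + 1) * (1 - c)) =
      N.choose i * c ^ i * (1 - c) ^ (N - i) * ((N - i) * c) := by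
  have hch : (N.choose (i + 1) : ℝ) * (i + 1) = N.choose i * (N - i) := by
    rw [← Nat.cast_sub hi.le]
    exact_mod_cast Nat.choose_succ_right_eq N i
  rw [show N - i = N - (i + 1) + 1 by omega, pow_succ, pow_succ]
  linear_combination (c ^ i * c * (1 - c) ^ (N - (i + 1)) * (1 - c)) * hch

theorem binomial_lt_of_mul_eq {N k : ℕ} {c : ℝ} (hc : c ∈ Set.Ioo 0 1) (hk : N * c = k) {j : ℕ}
    (hj : j ≠ k) :
    N.choose j * c ^ j * (1 - c) ^ (N - j) < N.choose k * c ^ k * (1 - c) ^ (N - k) := by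
  set b : ℕ → ℝ := fun i => N.choose i * c ^ i * (1 - c) ^ (N - i)
  obtain ⟨hc0, hc1⟩ := hc
  have hpos : ∀ i ≤ N, 0 < b i := fun i hi => by
    have := Nat.choose_pos hi
    positivity
  have hkN : k ≤ N := by exact_mod_cast (show (k : ℝ) ≤ N by nlinarith)
  -- `b (i + 1) - b i` has the sign of `k + c - (i + 1)`, positive iff `i < k`
  have hstep : ∀ i < N, b (i + 1) * ((i + 1) * (1 - c)) =
      b i * ((i + 1) * (1 - c)) + b i * (k + c - (i + 1)) := fun i hi => by
    rw [choose_mul_pow_mul_pow_succ hi c, ← hk]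
    ring
  have hup : StrictMonoOn b (Set.Iic k) := by
    refine strictMonoOn_of_lt_add_one Set.ordConnected_Iic fun i _ _ (hik : i + 1 ≤ k) => ?_
    have hik' : (i : ℝ) + 1 ≤ k := by exact_mod_cast hik
    refine lt_of_mul_lt_mul_right (a := (i + 1) * (1 - c)) ?_ (by positivity)
    rw [hstep i (by omega)]
    nlinarith [hpos i (by omega)]
  have hdown : StrictAntiOn b (Set.Icc k N) := by
    refine strictAntiOn_of_add_one_lt Set.ordConnected_Icc fun i _ hi hi1 => ?_
    have hki : (k : ℝ) ≤ i := by exact_mod_cast hi.1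
    refine lt_of_mul_lt_mul_right (a := (i + 1) * (1 - c)) ?_ (by positivity)
    rw [hstep i (by have := hi1.2; omega)]
    nlinarith [hpos i hi.2]
  rcases lt_or_gt_of_ne hj with hjk | hkj
  · exact hup (Set.mem_Iic.2 hjk.le) (Set.mem_Iic.2 le_rfl) hjk
  · rcases le_or_gt j N with hjN | hNj
    · exact hdown (Set.left_mem_Icc.2 hkN) ⟨hkj.le, hjN⟩ hkj
    · simpa [b, Nat.choose_eq_zero_of_lt hNj] using hpos k hkN

@[to_additive]
theorem Finset.prod_eq_mul_mul_prod_erase_erase {ι M : Type*} [DecidableEq ι] [CommMonoid M]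
    {s : Finset ι} {a b : ι} (ha : a ∈ s) (hb : b ∈ s) (hab : a ≠ b) (f : ι → M) :
    ∏ i ∈ s, f i = f a * f b * ∏ i ∈ (s.erase a).erase b, f i := by
  rw [mul_assoc, mul_prod_erase _ _ (mem_erase.2 ⟨hab.symm, hb⟩), mul_prod_erase _ _ ha]

theorem Function.update_update_apply_of_mem_erase_erase {ι α : Type*} [DecidableEq ι]
    {s : Finset ι} {a b i : ι} (hi : i ∈ (s.erase a).erase b) (P : ι → α) (u v : α) :
    Function.update (Function.update P a u) b v i = P i := by
  rw [Function.update_of_ne (mem_erase.1 hi).1,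
    Function.update_of_ne (mem_erase.1 (mem_erase.1 hi).2).1]

namespace PoissonBinomial

variable {ι : Type*}

noncomputable def pgf (s : Finset ι) (q : ι → ℝ) : ℝ[X] :=
  ∏ i ∈ s, (C (q i) * X + C (1 - q i))

theorem pgf_congr {s : Finset ι} {q q' : ι → ℝ} (h : ∀ i ∈ s, q i = q' i) :
    pgf s q = pgf s q' :=
  prod_congr rfl fun i hi => by rw [h i hi]

def configs (s : Finset ι) (μ : ℝ) : Set (ι → ℝ) :=
  Set.univ.pi (fun _ => Set.Icc 0 1) ∩ {q | ∑ i ∈ s, q i = μ}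

theorem isCompact_configs (s : Finset ι) (μ : ℝ) : IsCompact (configs s μ) :=
  (isCompact_univ_pi fun _ => isCompact_Icc).inter_right
    (isClosed_eq (by fun_prop) continuous_const)

variable [DecidableEq ι]

theorem coeff_pgf (s : Finset ι) (q : ι → ℝ) (j : ℕ) :
    (pgf s q).coeff j = ∑ A ∈ s.powersetCard j, (∏ i ∈ A, q i) * ∏ i ∈ s \ A, (1 - q i) := by
  have : pgf s q = ∑ A ∈ s.powerset,
      C ((∏ i ∈ A, q i) * ∏ i ∈ s \ A, (1 - q i)) * X ^ #A := by
    rw [pgf, prod_add]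
    refine sum_congr rfl fun A _ => ?_
    simp only [prod_mul_distrib, prod_const, map_mul, map_prod]
    ring
  rw [this, finsetSum_coeff, powersetCard_eq_filter, sum_filter]
  refine sum_congr rfl fun A _ => ?_
  rw [coeff_C_mul_X_pow]
  simp only [eq_comm]

theorem continuous_coeff_pgf (s : Finset ι) (j : ℕ) :
    Continuous fun q : ι → ℝ => (pgf s q).coeff j := by
  simp only [coeff_pgf]
  fun_prop

theorem coeff_pgf_nonneg {s : Finset ι} {q : ι → ℝ} (hq : ∀ i ∈ s, q i ∈ Set.Icc 0 1) (j : ℕ) :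
    0 ≤ (pgf s q).coeff j := by
  rw [coeff_pgf]
  refine sum_nonneg fun A hA => mul_nonneg (prod_nonneg fun i hi => ?_) (prod_nonneg fun i hi => ?_)
  · exact (hq i ((mem_powersetCard.1 hA).1 hi)).1
  · exact sub_nonneg.2 (hq i (mem_sdiff.1 hi).1).2

theorem coeff_pgf_of_forall_eq {s : Finset ι} {q : ι → ℝ} {c : ℝ} (hc : ∀ i ∈ s, q i = c)
    (j : ℕ) : (pgf s q).coeff j = (#s).choose j * c ^ j * (1 - c) ^ (#s - j) := by
  rw [coeff_pgf, ← card_powersetCard, mul_assoc, ← nsmul_eq_mul, ← sum_const]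
  refine sum_congr rfl fun A hA => ?_
  obtain ⟨hAs, hAj⟩ := mem_powersetCard.1 hA
  rw [prod_congr rfl fun i hi => hc i (hAs hi),
    prod_congr rfl fun i hi => congrArg (1 - ·) (hc i (mem_sdiff.1 hi).1),
    prod_const, prod_const, card_sdiff_of_subset hAs, hAj]

theorem coeff_pgf_lt_of_forall_eq {s : Finset ι} {q : ι → ℝ} {c : ℝ} (hc : c ∈ Set.Ioo 0 1)
    (hqc : ∀ i ∈ s, q i = c) {k : ℕ} (hk : ∑ i ∈ s, q i = k) {j : ℕ} (hj : j ≠ k) :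
    (pgf s q).coeff j < (pgf s q).coeff k := by
  rw [coeff_pgf_of_forall_eq hqc, coeff_pgf_of_forall_eq hqc]
  refine binomial_lt_of_mul_eq hc ?_ hj
  rw [← hk, sum_congr rfl hqc, sum_const, nsmul_eq_mul]

theorem pgf_eq_mul_erase {s : Finset ι} {i : ι} (hi : i ∈ s) (q : ι → ℝ) :
    pgf s q = (C (q i) * X + C (1 - q i)) * pgf (s.erase i) q :=
  (mul_prod_erase s _ hi).symm

theorem pgf_eq_erase_of_eq_zero {s : Finset ι} {q : ι → ℝ} {i : ι} (hi : i ∈ s) (h : q i = 0) :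
    pgf s q = pgf (s.erase i) q := by
  simp [pgf_eq_mul_erase hi, h]

theorem pgf_eq_X_mul_erase_of_eq_one {s : Finset ι} {q : ι → ℝ} {i : ι} (hi : i ∈ s)
    (h : q i = 1) : pgf s q = X * pgf (s.erase i) q := by
  simp [pgf_eq_mul_erase hi, h]

theorem pgf_eq_pair_mul {s : Finset ι} {a b : ι} (ha : a ∈ s) (hb : b ∈ s) (hab : a ≠ b)
    (q : ι → ℝ) :
    pgf s q = (1 + C (q a + q b) * (X - 1) + C (q a * q b) * (X - 1) ^ 2) *
      pgf ((s.erase a).erase b) q := by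
  rw [pgf, prod_eq_mul_mul_prod_erase_erase ha hb hab, pgf]
  simp only [map_add, map_mul, map_sub, map_one]
  ring

theorem pgf_update_update {s : Finset ι} {a b : ι} (ha : a ∈ s) (hb : b ∈ s) (hab : a ≠ b)
    (P : ι → ℝ) {u v : ℝ} (huv : u + v = P a + P b) :
    pgf s (Function.update (Function.update P a u) b v) =
      pgf s P + C (u * v - P a * P b) * ((X - 1) ^ 2 * pgf ((s.erase a).erase b) P) := by
  rw [pgf_eq_pair_mul ha hb hab, pgf_eq_pair_mul ha hb hab,
    pgf_congr fun i hi => Function.update_update_apply_of_mem_erase_erase hi P u v,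
    Function.update_self, Function.update_of_ne hab, Function.update_self, huv, map_sub]
  ring

theorem update_update_mem_configs {s : Finset ι} {μ : ℝ} {P : ι → ℝ} (hP : P ∈ configs s μ)
    {a b : ι} (ha : a ∈ s) (hb : b ∈ s) (hab : a ≠ b) {u v : ℝ} (hu : u ∈ Set.Icc 0 1)
    (hv : v ∈ Set.Icc 0 1) (huv : u + v = P a + P b) :
    Function.update (Function.update P a u) b v ∈ configs s μ := by
  refine ⟨fun i _ => ?_, ?_⟩
  · simp only [Function.update_apply]
    split_ifs
    exacts [hv, hu, hP.1 i trivial]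
  · show ∑ i ∈ s, _ = μ
    rw [sum_eq_add_add_sum_erase_erase ha hb hab, Function.update_self,
      Function.update_of_ne hab, Function.update_self, huv,
      sum_congr rfl fun i hi => Function.update_update_apply_of_mem_erase_erase hi P u v,
      ← sum_eq_add_add_sum_erase_erase ha hb hab]
    exact hP.2

theorem exists_lt_or_exists_boundary_le (L : ℝ[X] →ₗ[ℝ] ℝ) {s : Finset ι} {μ : ℝ}
    {P : ι → ℝ} (hP : P ∈ configs s μ) {a b : ι} (ha : a ∈ s) (hb : b ∈ s) (hPab : P a ≠ P b) :
    (∃ q ∈ configs s μ, L (pgf s q) < L (pgf s P)) ∨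
      ∃ q ∈ configs s μ, (∃ i ∈ s, q i = 0 ∨ q i = 1) ∧ L (pgf s q) ≤ L (pgf s P) := by
  have hab : a ≠ b := fun h => hPab (congrArg P h)
  set B := L ((X - 1) ^ 2 * pgf ((s.erase a).erase b) P)
  have hL : ∀ u v, u + v = P a + P b → L (pgf s (Function.update (Function.update P a u) b v)) =
      L (pgf s P) + (u * v - P a * P b) * B := fun u v huv => by
    rw [pgf_update_update ha hb hab P huv, map_add, C_mul', map_smul, smul_eq_mul]
  have hmem := fun {u v} => update_update_mem_configs hP ha hb hab (u := u) (v := v)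
  obtain ⟨⟨ha0, ha1⟩, ⟨hb0, hb1⟩⟩ := And.intro (hP.1 a trivial) (hP.1 b trivial)
  rcases lt_or_ge B 0 with hB | hB
  · -- moving both coordinates to their mean strictly increases the product
    left
    set m := (P a + P b) / 2
    refine ⟨_, hmem ⟨by positivity, by linarith⟩ ⟨by positivity, by linarith⟩ (add_halves _), ?_⟩
    rw [hL m m (add_halves _)]
    have : 0 < m * m - P a * P b := by
      have := sq_pos_of_ne_zero (sub_ne_zero.2 hPab)
      linear_combination this / 4
    nlinarith
  · right
    rcases le_or_gt (P a + P b) 1 with hs | hs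
    · refine ⟨_, hmem ⟨by positivity, hs⟩ ⟨le_rfl, zero_le_one⟩ (add_zero _),
        ⟨b, hb, Or.inl (Function.update_self ..)⟩, ?_⟩
      rw [hL _ 0 (add_zero _)]
      nlinarith [mul_nonneg ha0 hb0]
    · refine ⟨_, hmem ⟨zero_le_one, le_rfl⟩ ⟨by linarith, by linarith⟩ (add_sub_cancel _ _),
        ⟨a, ha, Or.inr ?_⟩, ?_⟩
      · rw [Function.update_of_ne hab, Function.update_self]
      rw [hL 1 _ (add_sub_cancel _ _)]
      nlinarith [mul_nonneg (sub_nonneg.2 ha1) (sub_nonneg.2 hb1)]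

theorem coeff_pgf_lt_of_boundary {s : Finset ι} {q : ι → ℝ} (hq : ∀ x ∈ s, q x ∈ Set.Icc 0 1)
    {i : ι} (hi : i ∈ s) (hqi : q i = 0 ∨ q i = 1)
    (ih : ∀ k : ℕ, ∑ x ∈ s.erase i, q x = k → ∀ j ≠ k,
      (pgf (s.erase i) q).coeff j < (pgf (s.erase i) q).coeff k)
    {k : ℕ} (hk : ∑ x ∈ s, q x = k) {j : ℕ} (hj : j ≠ k) :
    (pgf s q).coeff j < (pgf s q).coeff k := by
  rw [← add_sum_erase s q hi] at hk
  rcases hqi with h0 | h1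
  · rw [pgf_eq_erase_of_eq_zero hi h0]
    exact ih k (by linarith) j hj
  · rw [pgf_eq_X_mul_erase_of_eq_one hi h1]
    obtain ⟨k, rfl⟩ : ∃ k', k = k' + 1 := Nat.exists_eq_add_one.2 <| by
      have := sum_nonneg fun x (hx : x ∈ s.erase i) => (hq x (mem_of_mem_erase hx)).1
      exact_mod_cast (show (0 : ℝ) < k by linarith)
    have ih' := ih k (by push_cast at hk; linarith)
    rw [coeff_X_mul]
    cases j with
    | zero =>
      rw [coeff_X_mul_zero]
      exact (coeff_pgf_nonneg (fun x hx => hq x (mem_of_mem_erase hx)) _).trans_lt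
        (ih' (k + 1) (by omega))
    | succ j =>
      rw [coeff_X_mul]
      exact ih' j (by omega)

theorem coeff_pgf_lt_coeff_of_sum_eq (s : Finset ι) {q : ι → ℝ} (hq : ∀ i, q i ∈ Set.Icc 0 1)
    {k : ℕ} (hk : ∑ i ∈ s, q i = k) {j : ℕ} (hj : j ≠ k) :
    (pgf s q).coeff j < (pgf s q).coeff k := by
  induction s using Finset.strongInduction generalizing q k j with
  | H s ih =>
  let L := lcoeff ℝ k - lcoeff ℝ j
  have hL : ∀ q, L (pgf s q) = (pgf s q).coeff k - (pgf s q).coeff j := fun _ => rfl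
  suffices ∀ q ∈ configs s k, 0 < L (pgf s q) from
    sub_pos.1 <| hL q ▸ this q ⟨fun i _ => hq i, hk⟩
  have hboundary : ∀ q ∈ configs s k, (∃ i ∈ s, q i = 0 ∨ q i = 1) → 0 < L (pgf s q) := by
    rintro q ⟨hq, hk⟩ ⟨i, hi, hqi⟩
    rw [hL, sub_pos]
    exact coeff_pgf_lt_of_boundary (fun i _ => hq i trivial) hi hqi
      (fun k hk j hj => ih _ (erase_ssubset hi) (fun i => hq i trivial) hk hj) hk hj
  have hcont : Continuous fun q => L (pgf s q) := by
    simp only [hL]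
    exact (continuous_coeff_pgf s k).sub (continuous_coeff_pgf s j)
  obtain ⟨P, hP, hPmin⟩ :=
    (isCompact_configs s k).exists_isMinOn ⟨q, fun i _ => hq i, hk⟩ hcont.continuousOn
  refine fun q hq => lt_of_lt_of_le (?_ : 0 < L (pgf s P)) (hPmin hq)
  by_cases hbd : ∃ i ∈ s, P i = 0 ∨ P i = 1
  · exact hboundary P hP hbd
  by_cases hne : ∃ a ∈ s, ∃ b ∈ s, P a ≠ P b
  · obtain ⟨a, ha, b, hb, hPab⟩ := hne
    rcases exists_lt_or_exists_boundary_le L hP ha hb hPab with ⟨q, hq, hlt⟩ | ⟨q, hq, hqbd, hle⟩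
    · exact absurd (hPmin hq) (not_le.2 hlt)
    · exact (hboundary q hq hqbd).trans_le hle
  push Not at hbd hne
  obtain ⟨c, hc, hPc⟩ : ∃ c ∈ Set.Ioo (0 : ℝ) 1, ∀ i ∈ s, P i = c := by
    rcases s.eq_empty_or_nonempty with rfl | ⟨i, hi⟩
    · exact ⟨1 / 2, by norm_num, by simp⟩
    · obtain ⟨hPi0, hPi1⟩ := hP.1 i trivial
      exact ⟨P i, ⟨hPi0.lt_of_ne' (hbd i hi).1, hPi1.lt_of_ne (hbd i hi).2⟩,
        fun i' hi' => hne i' hi' i hi⟩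
  exact sub_pos.2 (coeff_pgf_lt_of_forall_eq hc hPc hP.2 hj)

end PoissonBinomial

theorem stmt_18_general (n : ℕ) (p : ℕ → ℝ) (hp : ∀ i, 0 ≤ p i ∧ p i ≤ 1) (k : ℕ)
    (hmean : (∑ i ∈ Finset.range n, p i) = (k : ℝ)) :
    ∀ j : ℕ, j ≠ k → pbPMF n p j < pbPMF n p k := by
  intro j hj
  simp only [pbPMF, ← PoissonBinomial.coeff_pgf]
  exact PoissonBinomial.coeff_pgf_lt_coeff_of_sum_eq _ hp hmean hj

/-- If the mean of a Poisson-binomial sum is an integer k and the distribution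
is not a point mass, then k is the unique mode. -/
theorem stmt_18 (n : ℕ) (p : ℕ → ℝ) (hp : ∀ i, 0 ≤ p i ∧ p i ≤ 1) (k : ℕ) (hk : 1 ≤ k)
    (hmean : (∑ i ∈ Finset.range n, p i) = (k : ℝ))
    (hnd : ¬ ∀ i < n, p i = 0 ∨ p i = 1) :
    ∀ j : ℕ, j ≠ k → pbPMF n p j < pbPMF n p k :=
  stmt_18_general n p hp k hmean
end

section
/- Let S have a log-concave probability function f on the nonnegative integers with leading mode m (f(m-1) ≤ f(m) > f(m+1)), and let B ~ Bernoulli(q) be independent of S. Set γ* = (f(m) − f(m+1)) / (2f(m) − f(m-1) − f(m+1)). Then the leading mode of S + B equals m if q < γ*, and equals m+1 if q ≥ γ*. -/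
/-- Adding a Bernoulli(q) variable to a log-concave S with leading mode m:
the leading mode of S + B is m if q < γ* and m+1 if q ≥ γ*, where γ* is the
peak skewness (f(m) − f(m+1)) / (2f(m) − f(m−1) − f(m+1)). -/
theorem stmt_19 (f : ℤ → ℝ) (hzero : ∀ k : ℤ, k < 0 → f k = 0)
    (hnonneg : ∀ k : ℤ, 0 ≤ f k)
    (hlc : ∀ k : ℤ, f (k - 1) * f (k + 1) ≤ (f k) ^ 2)
    (m : ℤ) (hm1 : f (m - 1) ≤ f m) (hm2 : f (m + 1) < f m)
    (hden : 0 < 2 * f m - f (m - 1) - f (m + 1))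
    (q : ℝ) (hq0 : 0 ≤ q) (hq1 : q ≤ 1)
    (g : ℤ → ℝ) (hg : ∀ k : ℤ, g k = q * f (k - 1) + (1 - q) * f k) :
    (q < (f m - f (m + 1)) / (2 * f m - f (m - 1) - f (m + 1)) →
      g (m - 1) ≤ g m ∧ g (m + 1) < g m) ∧
    ((f m - f (m + 1)) / (2 * f m - f (m - 1) - f (m + 1)) ≤ q →
      g m ≤ g (m + 1) ∧ g (m + 2) < g (m + 1)) := by
  have hcpos : 0 < f m := lt_of_le_of_lt (hnonneg (m + 1)) hm2
  have ha : 0 ≤ f (m - 2) := hnonneg _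
  have hb : 0 ≤ f (m - 1) := hnonneg _
  have hd : 0 ≤ f (m + 1) := hnonneg _
  have he : 0 ≤ f (m + 2) := hnonneg _
  have hlc1 : f (m - 2) * f m ≤ f (m - 1) ^ 2 := by
    have := hlc (m - 1); simpa [sub_sub] using this
  have hlc2 : f m * f (m + 2) ≤ f (m + 1) ^ 2 := by
    have := hlc (m + 1)
    have e1 : m + 1 - 1 = m := by ring
    have e2 : m + 1 + 1 = m + 2 := by ring
    rwa [e1, e2] at this
  -- monotonicity around the mode
  have hmon1 : f (m - 2) ≤ f (m - 1) := by nlinarith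
  have hmon2 : f (m + 2) ≤ f (m + 1) := by nlinarith
  have hgm : g m = q * f (m - 1) + (1 - q) * f m := hg m
  have hgm1 : g (m - 1) = q * f (m - 2) + (1 - q) * f (m - 1) := by
    have := hg (m - 1)
    have e1 : m - 1 - 1 = m - 2 := by ring
    rwa [e1] at this
  have hgp1 : g (m + 1) = q * f m + (1 - q) * f (m + 1) := by
    have := hg (m + 1)
    have e1 : m + 1 - 1 = m := by ring
    rwa [e1] at this
  have hgp2 : g (m + 2) = q * f (m + 1) + (1 - q) * f (m + 2) := by
    have := hg (m + 2)
    have e1 : m + 2 - 1 = m + 1 := by ring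
    rwa [e1] at this
  constructor
  · intro hlt
    have hqD : q * (2 * f m - f (m - 1) - f (m + 1)) < f m - f (m + 1) := by
      have := (lt_div_iff₀ hden).mp hlt
      linarith
    constructor
    · rw [hgm1, hgm]; nlinarith
    · rw [hgp1, hgm]; nlinarith
  · intro hge
    have hqD : f m - f (m + 1) ≤ q * (2 * f m - f (m - 1) - f (m + 1)) := by
      have := (div_le_iff₀ hden).mp hge
      linarith
    have hqpos : 0 < q := by
      rcases lt_or_ge 0 q with h | h
      · exact h
      · exfalso; nlinarith
    constructor
    · rw [hgm, hgp1]; nlinarith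
    · rw [hgp2, hgp1]; nlinarith
end
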